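/- arXiv:2201.05828 — 6 statements merged into one kernel-verified Lean document; each statement's English description precedes it below -/
import Mathlib

section
/- Suppose the family {f_θ} has the MLR property and the null density f_0 is symmetric about 0. Let Z have density f_θ with θ < 0, and let p = 2·F_0(−|Z|). Then for all 0 < s ≤ t ≤ 1, P(p ≤ s | p ≤ t, Z ≥ 0) ≤ s/t, whenever the conditioning event has positive probability. -/
open MeasureTheory Set Filter Topology

/-- For `θ < 0` under MLR and a symmetric null,
`P(p ≤ s | p ≤ t, Z ≥ 0) ≤ s/t` for `0 < s ≤ t ≤ 1`. -/
theorem stmt5 {Ω : Type*} [MeasurableSpace Ω] (μ : Measure Ω) [IsProbabilityMeasure μ]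
    (Z : Ω → ℝ) (hZ : Measurable Z)
    (f : ℝ → ℝ → ℝ) (F : ℝ → ℝ → ℝ)
    (hpos : ∀ θ z, 0 < f θ z)
    (hintg : ∀ θ, Integrable (f θ))
    (hprob : ∀ θ, ∫ x, f θ x = 1)
    (hF : ∀ θ z, F θ z = ∫ x in Iic z, f θ x)
    (hsymmden : ∀ z, f 0 (-z) = f 0 z)
    (hMLR : ∀ θ θ' z z', θ < θ' → z < z' → f θ' z / f θ z ≤ f θ' z' / f θ z')
    (θ : ℝ) (hθ : θ < 0)
    (hlaw : ∀ z, μ {ω | Z ω ≤ z} = ENNReal.ofReal (F θ z)) :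
    ∀ s t : ℝ, 0 < s → s ≤ t → t ≤ 1 →
      0 < μ {ω | 2 * F 0 (-|Z ω|) ≤ t ∧ 0 ≤ Z ω} →
      μ {ω | 2 * F 0 (-|Z ω|) ≤ s ∧ 0 ≤ Z ω}
        / μ {ω | 2 * F 0 (-|Z ω|) ≤ t ∧ 0 ≤ Z ω} ≤ ENNReal.ofReal (s / t) := by
  intro s t hs hst ht1 hμt
  clear hμt
  have ht0 : 0 < t := lt_of_lt_of_le hs hst
  have hInt : ∀ (θ' : ℝ) (S : Set ℝ), IntegrableOn (f θ') S := fun θ' S =>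
    (hintg θ').integrableOn
  have hnn : ∀ (θ' : ℝ) (S : Set ℝ), 0 ≤ᵐ[volume.restrict S] (f θ') := fun θ' S =>
    Filter.Eventually.of_forall fun x => (hpos θ' x).le
  -- continuity of F
  have hFcont : ∀ θ' : ℝ, Continuous (F θ') := by
    intro θ'
    have h1 : Continuous fun z => F θ' 0 + ∫ x in (0:ℝ)..z, f θ' x :=
      continuous_const.add (intervalIntegral.continuous_primitive
        (fun a b => (hintg θ').intervalIntegrable) 0)
    convert h1 using 1
    funext z
    rw [hF, hF, ← intervalIntegral.integral_Iic_sub_Iic (hInt θ' _) (hInt θ' _)]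
    ring
  -- monotonicity of F
  have hFmono : ∀ θ' : ℝ, Monotone (F θ') := by
    intro θ' z z' h
    rw [hF, hF]
    exact setIntegral_mono_set (hInt θ' _) (hnn θ' _)
      (HasSubset.Subset.eventuallyLE (Iic_subset_Iic.2 h))
  have hFstrict : ∀ θ' : ℝ, StrictMono (F θ') := by
    intro θ' z z' h
    have key : 0 < ∫ x in Ioc z z', f θ' x := by
      rw [setIntegral_pos_iff_support_of_nonneg_ae (hnn θ' _) (hInt θ' _)]
      have hsupp : Function.support (f θ') ∩ Ioc z z' = Ioc z z' := by
        apply inter_eq_self_of_subset_right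
        intro x _
        exact (hpos θ' x).ne'
      rw [hsupp, Real.volume_Ioc]
      simp only [ENNReal.ofReal_pos, sub_pos]
      exact h
    have split : F θ' z' = F θ' z + ∫ x in Ioc z z', f θ' x := by
      rw [hF, hF, ← Iic_union_Ioc_eq_Iic h.le,
        setIntegral_union (Iic_disjoint_Ioc le_rfl) measurableSet_Ioc
          (hInt θ' _) (hInt θ' _)]
    rw [split]
    linarith
  -- tail formula
  have htail : ∀ (θ' z : ℝ), ∫ x in Ioi z, f θ' x = 1 - F θ' z := by
    intro θ' z
    have h := intervalIntegral.integral_Iic_add_Ioi (μ := volume) (f := f θ') (b := z)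
      (hInt θ' _) (hInt θ' _)
    rw [hprob θ'] at h
    rw [hF]
    linarith
  have hF01 : ∀ (θ' z : ℝ), 0 ≤ F θ' z ∧ F θ' z ≤ 1 := by
    intro θ' z
    constructor
    · rw [hF]; exact setIntegral_nonneg measurableSet_Iic fun x _ => (hpos θ' x).le
    · have h2 : 0 ≤ ∫ x in Ioi z, f θ' x :=
        setIntegral_nonneg measurableSet_Ioi fun x _ => (hpos θ' x).le
      rw [htail] at h2; linarith
  -- symmetry of F 0
  have hFsym : ∀ a : ℝ, F 0 (-a) = 1 - F 0 a := by
    intro a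
    calc F 0 (-a) = ∫ x in Iic (-a), f 0 x := hF 0 (-a)
      _ = ∫ x in Iic (-a), f 0 (-x) := by
          refine setIntegral_congr_fun measurableSet_Iic fun x _ => ?_
          rw [hsymmden]
      _ = ∫ x in Ioi a, f 0 x := by
          simpa using integral_comp_neg_Iic (-a) (f 0)
      _ = 1 - F 0 a := htail 0 a
  have hF00 : F 0 0 = 1 / 2 := by
    have h := hFsym 0
    rw [neg_zero] at h
    linarith
  -- F 0 tends to 0 at -∞
  have hbotF : Tendsto (F 0) atBot (𝓝 0) := by
    have h1 : Tendsto (fun a : ℝ => ∫ x in a..(0:ℝ), f 0 x) atBot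
        (𝓝 (∫ x in Iic (0:ℝ), f 0 x)) :=
      intervalIntegral_tendsto_integral_Iic 0 (hInt 0 _) tendsto_id
    have h3 : Tendsto (fun a : ℝ => F 0 0 - ∫ x in a..(0:ℝ), f 0 x) atBot
        (𝓝 (F 0 0 - ∫ x in Iic (0:ℝ), f 0 x)) := tendsto_const_nhds.sub h1
    have h4 : F 0 0 - ∫ x in Iic (0:ℝ), f 0 x = 0 := by rw [hF]; ring
    have h5 : (fun a : ℝ => F 0 0 - ∫ x in a..(0:ℝ), f 0 x) = F 0 := by
      funext a
      rw [hF, hF, ← intervalIntegral.integral_Iic_sub_Iic (hInt 0 _) (hInt 0 _)]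
      ring
    rw [h4, h5] at h3
    exact h3
  -- existence of quantiles
  have hq : ∀ x : ℝ, 0 < x → x ≤ 1 → ∃ q : ℝ, q ≤ 0 ∧ F 0 q = x / 2 := by
    intro x hx hx1
    have hev : ∀ᶠ a in atBot, F 0 a < x / 2 :=
      hbotF.eventually (Filter.Tendsto.eventually_lt_const (by positivity) tendsto_id)
    obtain ⟨M0, hM0⟩ := eventually_atBot.mp hev
    set M := min M0 0 with hM
    have hFM : F 0 M < x / 2 := hM0 M (min_le_left _ _)
    have hM0' : M ≤ 0 := min_le_right _ _
    have hIVT := intermediate_value_Icc hM0' (hFcont 0).continuousOn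
    have hmem : x / 2 ∈ Icc (F 0 M) (F 0 0) := ⟨hFM.le, by rw [hF00]; linarith⟩
    obtain ⟨q, hqmem, hqeq⟩ := hIVT hmem
    exact ⟨q, hqmem.2, hqeq⟩
  -- event identification
  have hevent : ∀ q x : ℝ, q ≤ 0 → F 0 q = x / 2 →
      {ω | 2 * F 0 (-|Z ω|) ≤ x ∧ 0 ≤ Z ω} = {ω | -q ≤ Z ω} := by
    intro q x hq0 hqx
    ext ω
    simp only [mem_setOf_eq]
    constructor
    · rintro ⟨h1, h2⟩
      rw [abs_of_nonneg h2] at h1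
      have h3 : F 0 (-Z ω) ≤ F 0 q := by rw [hqx]; linarith
      have h4 : -Z ω ≤ q := (hFstrict 0).le_iff_le.mp h3
      linarith
    · intro h
      have h2 : 0 ≤ Z ω := le_trans (by linarith) h
      refine ⟨?_, h2⟩
      rw [abs_of_nonneg h2]
      have h3 : F 0 (-Z ω) ≤ F 0 q := hFmono 0 (by linarith)
      rw [hqx] at h3
      linarith
  -- measure of upper tail events
  have hmeasge : ∀ c : ℝ, μ {ω | c ≤ Z ω} = ENNReal.ofReal (1 - F θ c) := by
    intro c
    have hlt : μ {ω | Z ω < c} = ENNReal.ofReal (F θ c) := by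
      have hU : {ω | Z ω < c} = ⋃ n : ℕ, {ω | Z ω ≤ c - 1 / (n + 1)} := by
        ext ω
        simp only [mem_setOf_eq, mem_iUnion]
        constructor
        · intro h
          obtain ⟨n, hn⟩ := exists_nat_one_div_lt (sub_pos.mpr h)
          exact ⟨n, by linarith⟩
        · rintro ⟨n, hn⟩
          have hp : 0 < 1 / ((n : ℝ) + 1) := by positivity
          linarith
      have hmono : Monotone fun n : ℕ => {ω | Z ω ≤ c - 1 / (n + 1)} := by
        intro m n hmn ω hω
        simp only [mem_setOf_eq] at *
        have h1 : 1 / ((n : ℝ) + 1) ≤ 1 / ((m : ℝ) + 1) := by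
          apply one_div_le_one_div_of_le (by positivity)
          have : (m : ℝ) ≤ n := by exact_mod_cast hmn
          linarith
        linarith
      have h1 : Tendsto (fun n : ℕ => μ {ω | Z ω ≤ c - 1 / (n + 1)}) atTop
          (𝓝 (μ {ω | Z ω < c})) := by
        rw [hU]
        exact tendsto_measure_iUnion_atTop hmono
      have h3 : Tendsto (fun n : ℕ => c - 1 / ((n : ℝ) + 1)) atTop (𝓝 c) := by
        have h0 : Tendsto (fun n : ℕ => 1 / ((n : ℝ) + 1)) atTop (𝓝 0) :=
          tendsto_one_div_add_atTop_nhds_zero_nat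
        simpa using tendsto_const_nhds.sub h0
      have h4 : Tendsto (fun n : ℕ => F θ (c - 1 / ((n : ℝ) + 1))) atTop
          (𝓝 (F θ c)) := ((hFcont θ).tendsto c).comp h3
      have h2 : Tendsto (fun n : ℕ => μ {ω | Z ω ≤ c - 1 / (n + 1)}) atTop
          (𝓝 (ENNReal.ofReal (F θ c))) := by
        simp_rw [hlaw]
        exact (ENNReal.continuous_ofReal.tendsto _).comp h4
      exact tendsto_nhds_unique h1 h2
    have hcompl : {ω | c ≤ Z ω} = {ω | Z ω < c}ᶜ := by
      ext ω; simp [not_lt]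
    have hms : MeasurableSet {ω | Z ω < c} := hZ measurableSet_Iio
    rw [hcompl, measure_compl hms (measure_ne_top μ _),
      measure_univ, hlt, ← ENNReal.ofReal_one,
      ← ENNReal.ofReal_sub _ (hF01 θ c).1]
  -- core MLR inequality
  have hcore : ∀ a b : ℝ, a ≤ b →
      (1 - F θ b) * (1 - F 0 a) ≤ (1 - F 0 b) * (1 - F θ a) := by
    intro a b hab
    have hsplit : ∀ θ' : ℝ, (∫ x in Ioi a, f θ' x)
        = (∫ x in Ioc a b, f θ' x) + ∫ x in Ioi b, f θ' x := by
      intro θ'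
      rw [← setIntegral_union (Ioc_disjoint_Ioi le_rfl) measurableSet_Ioi
        (hInt θ' _) (hInt θ' _), Ioc_union_Ioi_eq_Ioi hab]
    have e1 : 1 - F θ a = (∫ x in Ioc a b, f θ x) + ∫ x in Ioi b, f θ x := by
      rw [← htail, hsplit θ]
    have e2 : 1 - F 0 a = (∫ x in Ioc a b, f 0 x) + ∫ x in Ioi b, f 0 x := by
      rw [← htail, hsplit 0]
    have e3 : 1 - F θ b = ∫ x in Ioi b, f θ x := (htail θ b).symm
    have e4 : 1 - F 0 b = ∫ x in Ioi b, f 0 x := (htail 0 b).symm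
    have hptwise : ∀ x ∈ Ioc a b,
        f 0 x * ∫ y in Ioi b, f θ y ≤ f θ x * ∫ y in Ioi b, f 0 y := by
      intro x hx
      have h1 : ∀ y ∈ Ioi b, f 0 x * f θ y ≤ f θ x * f 0 y := by
        intro y hy
        have hxy : x < y := lt_of_le_of_lt hx.2 hy
        have hm := hMLR θ 0 x y hθ hxy
        rw [div_le_div_iff₀ (hpos θ x) (hpos θ y)] at hm
        nlinarith [hm]
      calc f 0 x * ∫ y in Ioi b, f θ y = ∫ y in Ioi b, f 0 x * f θ y := by
            rw [integral_const_mul]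
        _ ≤ ∫ y in Ioi b, f θ x * f 0 y :=
            setIntegral_mono_on ((hInt θ _).const_mul _) ((hInt 0 _).const_mul _)
              measurableSet_Ioi h1
        _ = f θ x * ∫ y in Ioi b, f 0 y := by rw [integral_const_mul]
    have key : (∫ y in Ioi b, f θ y) * ∫ x in Ioc a b, f 0 x
        ≤ (∫ y in Ioi b, f 0 y) * ∫ x in Ioc a b, f θ x := by
      calc (∫ y in Ioi b, f θ y) * ∫ x in Ioc a b, f 0 x
          = ∫ x in Ioc a b, f 0 x * ∫ y in Ioi b, f θ y := by
            rw [integral_mul_const]; ring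
        _ ≤ ∫ x in Ioc a b, f θ x * ∫ y in Ioi b, f 0 y :=
            setIntegral_mono_on ((hInt 0 _).mul_const _) ((hInt θ _).mul_const _)
              measurableSet_Ioc hptwise
        _ = (∫ y in Ioi b, f 0 y) * ∫ x in Ioc a b, f θ x := by
            rw [integral_mul_const]; ring
    rw [e1, e2, e3, e4]
    nlinarith [key]
  -- assemble
  obtain ⟨qt, hqt0, hqtF⟩ := hq t ht0 ht1
  obtain ⟨qs, hqs0, hqsF⟩ := hq s hs (hst.trans ht1)
  have hqst : qs ≤ qt := (hFstrict 0).le_iff_le.mp (by rw [hqsF, hqtF]; linarith)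
  rw [hevent qs s hqs0 hqsF, hevent qt t hqt0 hqtF, hmeasge, hmeasge]
  have hcoreab := hcore (-qt) (-qs) (neg_le_neg hqst)
  have h1a : 1 - F 0 (-qt) = t / 2 := by rw [hFsym, hqtF]; ring
  have h1b : 1 - F 0 (-qs) = s / 2 := by rw [hFsym, hqsF]; ring
  rw [h1a, h1b] at hcoreab
  apply ENNReal.div_le_of_le_mul
  rw [← ENNReal.ofReal_mul (by positivity : (0:ℝ) ≤ s / t)]
  apply ENNReal.ofReal_le_ofReal
  rw [div_mul_eq_mul_div, le_div_iff₀ ht0]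
  linarith
end

section
/- Suppose the family {f_θ} has the MLR property and the null density f_0 is symmetric about 0. Let Z have density f_θ with θ > 0, and p = 2·F_0(−|Z|). Then for all 0 < s ≤ t ≤ 1, P(p ≤ s | p ≤ t, Z ≤ 0) ≤ s/t, whenever the conditioning event has positive probability. -/
open MeasureTheory Set

/-- Positivity of the integral of a positive integrable function on a set of
positive measure. -/
lemma aux_int_pos {g : ℝ → ℝ} (hg : Integrable g) (hgpos : ∀ x, 0 < g x)
    {s : Set ℝ} (hs : MeasurableSet s) (hμs : 0 < volume s) :
    0 < ∫ x in s, g x := by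
  rw [setIntegral_pos_iff_support_of_nonneg_ae
      (Filter.Eventually.of_forall fun x => (hgpos x).le) hg.integrableOn]
  have : Function.support g = univ := by
    ext x; simp [Function.support, (hgpos x).ne']
  rwa [this, univ_inter]

/-- Splitting the CDF integral. -/
lemma aux_split {g : ℝ → ℝ} (hg : Integrable g) {z z' : ℝ} (h : z ≤ z') :
    ∫ x in Iic z', g x = (∫ x in Iic z, g x) + ∫ x in Ioc z z', g x := by
  rw [← Iic_union_Ioc_eq_Iic h,
    setIntegral_union (Iic_disjoint_Ioc le_rfl) measurableSet_Ioc
      hg.integrableOn hg.integrableOn]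

/-- For `θ > 0` under MLR and a symmetric null,
`P(p ≤ s | p ≤ t, Z ≤ 0) ≤ s/t` for `0 < s ≤ t ≤ 1`. -/
theorem stmt6 {Ω : Type*} [MeasurableSpace Ω] (μ : Measure Ω) [IsProbabilityMeasure μ]
    (Z : Ω → ℝ) (hZ : Measurable Z)
    (f : ℝ → ℝ → ℝ) (F : ℝ → ℝ → ℝ)
    (hpos : ∀ θ z, 0 < f θ z)
    (hintg : ∀ θ, Integrable (f θ))
    (hprob : ∀ θ, ∫ x, f θ x = 1)
    (hF : ∀ θ z, F θ z = ∫ x in Iic z, f θ x)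
    (hsymmden : ∀ z, f 0 (-z) = f 0 z)
    (hMLR : ∀ θ θ' z z', θ < θ' → z < z' → f θ' z / f θ z ≤ f θ' z' / f θ z')
    (θ : ℝ) (hθ : 0 < θ)
    (hlaw : ∀ z, μ {ω | Z ω ≤ z} = ENNReal.ofReal (F θ z)) :
    ∀ s t : ℝ, 0 < s → s ≤ t → t ≤ 1 →
      0 < μ {ω | 2 * F 0 (-|Z ω|) ≤ t ∧ Z ω ≤ 0} →
      μ {ω | 2 * F 0 (-|Z ω|) ≤ s ∧ Z ω ≤ 0}
        / μ {ω | 2 * F 0 (-|Z ω|) ≤ t ∧ Z ω ≤ 0} ≤ ENNReal.ofReal (s / t) := by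
  intro s t hs hst ht1 _
  have ht : 0 < t := lt_of_lt_of_le hs hst
  -- strict monotonicity of each F θ'
  have hFsm : ∀ θ', StrictMono (F θ') := by
    intro θ' z z' hzz
    rw [hF, hF, aux_split (hintg θ') hzz.le, lt_add_iff_pos_right]
    exact aux_int_pos (hintg θ') (hpos θ') measurableSet_Ioc
      (by simp [Real.volume_Ioc, hzz])
  -- positivity of F θ'
  have hFpos : ∀ θ' z, 0 < F θ' z := by
    intro θ' z
    rw [hF]
    exact aux_int_pos (hintg θ') (hpos θ') measurableSet_Iic (by simp)
  -- continuity of F 0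
  have hFcont : Continuous (F 0) := by
    have h1 : ∀ z, F 0 z = F 0 0 + ∫ x in (0:ℝ)..z, f 0 x := by
      intro z
      rw [hF, hF, ← intervalIntegral.integral_Iic_sub_Iic (hintg 0).integrableOn (hintg 0).integrableOn]
      ring
    have : Continuous fun z => F 0 0 + ∫ x in (0:ℝ)..z, f 0 x :=
      continuous_const.add (intervalIntegral.continuous_primitive
        (fun a b => (hintg 0).intervalIntegrable) 0)
    exact this.congr fun z => (h1 z).symm
  -- F 0 0 = 1/2
  have hF00 : F 0 0 = 1/2 := by
    have hsplit : (∫ x in Iic (0:ℝ), f 0 x) + ∫ x in Ioi (0:ℝ), f 0 x = 1 := by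
      rw [← compl_Iic]
      rw [integral_add_compl measurableSet_Iic (hintg 0)]
      exact hprob 0
    have hsym : ∫ x in Ioi (0:ℝ), f 0 x = ∫ x in Iic (0:ℝ), f 0 x := by
      rw [show Ioi (0:ℝ) = Ioi (-(0:ℝ)) by norm_num, ← integral_comp_neg_Iic]
      simp_rw [hsymmden]
    rw [hF]
    linarith [hsplit, hsym]
  -- existence of quantiles
  have hquant : ∀ x : ℝ, 0 < x → x ≤ 1 → (∃ z, F 0 z ≤ x/2) →
      ∃ q, q ≤ 0 ∧ F 0 q = x/2 := by
    intro x hx hx1 ⟨z₀, hz₀⟩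
    have hz₀1 : z₀ ≤ 1 := by
      by_contra h
      have := hFsm 0 (show (0:ℝ) < z₀ by linarith)
      rw [hF00] at this; linarith
    have hF1 : x/2 ≤ F 0 1 := by
      have := hFsm 0 (show (0:ℝ) < 1 by norm_num)
      rw [hF00] at this; linarith
    obtain ⟨q, _, hq⟩ := intermediate_value_Icc hz₀1 (hFcont.continuousOn) ⟨hz₀, hF1⟩
    refine ⟨q, ?_, hq⟩
    have : F 0 q ≤ F 0 0 := by rw [hq, hF00]; linarith
    exact (hFsm 0).le_iff_le.mp this
  -- the event set as a lower set
  have hset : ∀ x q : ℝ, q ≤ 0 → F 0 q = x/2 →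
      {ω | 2 * F 0 (-|Z ω|) ≤ x ∧ Z ω ≤ 0} = {ω | Z ω ≤ q} := by
    intro x q hq0 hFq
    ext ω
    simp only [mem_setOf_eq]
    constructor
    · rintro ⟨h1, h2⟩
      rw [abs_of_nonpos h2, neg_neg] at h1
      have : F 0 (Z ω) ≤ F 0 q := by rw [hFq]; linarith
      exact (hFsm 0).le_iff_le.mp this
    · intro h
      have h2 : Z ω ≤ 0 := le_trans h hq0
      refine ⟨?_, h2⟩
      rw [abs_of_nonpos h2, neg_neg]
      have : F 0 (Z ω) ≤ F 0 q := (hFsm 0).le_iff_le.mpr h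
      rw [hFq] at this; linarith
  -- main case analysis
  by_cases hne : ∃ z, F 0 z ≤ s/2
  · obtain ⟨qs, hqs0, hqs⟩ := hquant s hs (le_trans hst ht1) hne
    obtain ⟨qt, hqt0, hqt⟩ := hquant t ht ht1
      (hne.imp fun z hz => le_trans hz (by linarith))
    have hqst : qs ≤ qt := by
      apply (hFsm 0).le_iff_le.mp
      rw [hqs, hqt]; linarith
    rw [hset s qs hqs0 hqs, hset t qt hqt0 hqt, hlaw, hlaw]
    -- core MLR inequality: F θ qs * F 0 qt ≤ F θ qt * F 0 qs
    have hcore : F θ qs * F 0 qt ≤ F θ qt * F 0 qs := by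
      -- pointwise step
      have step1 : ∀ y, qs < y → F θ qs * f 0 y ≤ f θ y * F 0 qs := by
        intro y hy
        rw [hF, hF, ← integral_mul_const, ← integral_const_mul]
        apply setIntegral_mono_on ((hintg θ).integrableOn.mul_const _)
          (((hintg 0).integrableOn).const_mul _) measurableSet_Iic
        intro x hx
        have hxy : x < y := lt_of_le_of_lt hx hy
        have := hMLR 0 θ x y hθ hxy
        have h0x := hpos 0 x
        have h0y := hpos 0 y
        rw [div_le_div_iff₀ h0x h0y] at this
        calc f θ x * f 0 y ≤ f θ y * f 0 x := this
        _ = f θ y * f 0 x := rfl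
      -- integrate over Ioc qs qt
      have step2 : F θ qs * (∫ y in Ioc qs qt, f 0 y) ≤
          (∫ y in Ioc qs qt, f θ y) * F 0 qs := by
        rw [← integral_const_mul, ← integral_mul_const]
        apply setIntegral_mono_on (((hintg 0).integrableOn).const_mul _)
          ((hintg θ).integrableOn.mul_const _) measurableSet_Ioc
        intro y hy
        exact step1 y hy.1
      have hsθ : F θ qt = F θ qs + ∫ y in Ioc qs qt, f θ y := by
        rw [hF, hF]; exact aux_split (hintg θ) hqst
      have hs0 : F 0 qt = F 0 qs + ∫ y in Ioc qs qt, f 0 y := by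
        rw [hF, hF]; exact aux_split (hintg 0) hqst
      rw [hsθ, hs0]
      nlinarith [step2]
    rw [← ENNReal.ofReal_div_of_pos (hFpos θ qt)]
    apply ENNReal.ofReal_le_ofReal
    rw [div_le_div_iff₀ (hFpos θ qt) ht]
    rw [hqs, hqt] at hcore
    nlinarith [hcore]
  · -- numerator event is empty
    have hempty : {ω | 2 * F 0 (-|Z ω|) ≤ s ∧ Z ω ≤ 0} = ∅ := by
      ext ω
      simp only [mem_setOf_eq, mem_empty_iff_false, iff_false, not_and]
      intro h1 h2
      exact absurd ⟨-|Z ω|, by linarith⟩ hne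
    rw [hempty]
    simp
end

section
/- If Y ~ Binomial(n, λ) with n ∈ ℕ, n ≥ 1, and λ ∈ (0,1), then E[Y/(n − Y + 1)] = (1 − λ^n)·λ/(1 − λ). -/
open Finset

/-- Pascal's absorption identity `(k + 1) C(n, k + 1) = (n - k) C(n, k)`, solved for `C(n, k)`. -/
theorem Nat.cast_choose_succ_mul_div_eq_choose {K : Type*} [Field K] [CharZero K] {n k : ℕ}
    (hk : k < n) :
    (n.choose (k + 1) : K) * (((k + 1 : ℕ) : K) / ((n - (k + 1) : ℕ) + 1 : K)) = n.choose k := by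
  have hsub : n - (k + 1) + 1 = n - k := by omega
  have hden : ((n - (k + 1) : ℕ) + 1 : K) = ((n - k : ℕ) : K) := by
    rw [← hsub]; push_cast; ring
  have hden_ne : ((n - k : ℕ) : K) ≠ 0 := by exact_mod_cast (Nat.sub_pos_of_lt hk).ne'
  rw [hden, ← mul_div_assoc, div_eq_iff hden_ne]
  exact_mod_cast Nat.choose_succ_right_eq n k

theorem sum_range_choose_mul_pow_mul_pow_add_pow {R : Type*} [CommSemiring R] (x y : R) (n : ℕ) :
    ∑ k ∈ range n, (n.choose k : R) * y ^ (n - k) * x ^ k + x ^ n = (x + y) ^ n := by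
  rw [add_pow, sum_range_succ, Nat.choose_self, Nat.sub_self]
  simp only [Nat.cast_one, pow_zero, mul_one]
  congr 1
  exact sum_congr rfl fun k _ => by ring

/-- Shifting the index by one turns the weight `k / (n - k + 1)` into the constant ratio
`x / y` of consecutive binomial terms. -/
theorem binomial_term_succ_mul_div {K : Type*} [Field K] [CharZero K] {n k : ℕ} (hk : k < n)
    (x : K) {y : K} (hy : y ≠ 0) :
    (n.choose (k + 1) : K) * y ^ (n - (k + 1)) * x ^ (k + 1) *
        (((k + 1 : ℕ) : K) / ((n - (k + 1) : ℕ) + 1 : K))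
      = (n.choose k : K) * y ^ (n - k) * x ^ k * (x / y) := by
  rw [← Nat.cast_choose_succ_mul_div_eq_choose hk, show n - k = n - (k + 1) + 1 by omega]
  field_simp
  ring

theorem stmt7_general (n : ℕ) (l : ℝ) (hl : l ∈ Set.Ioo (0:ℝ) 1) :
    ∑ i ∈ Finset.range (n + 1),
        (n.choose i : ℝ) * (1 - l) ^ (n - i) * l ^ i * ((i : ℝ) / ((n - i : ℕ) + 1 : ℝ))
      = (1 - l ^ n) * l / (1 - l) := by
  have hl1 : (1 : ℝ) - l ≠ 0 := sub_ne_zero.mpr hl.2.ne'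
  have hbinom : ∑ k ∈ range n, (n.choose k : ℝ) * (1 - l) ^ (n - k) * l ^ k = 1 - l ^ n := by
    rw [eq_sub_iff_add_eq, sum_range_choose_mul_pow_mul_pow_add_pow, add_sub_cancel, one_pow]
  rw [sum_range_succ', Nat.cast_zero, zero_div, mul_zero, add_zero,
    sum_congr rfl fun k hk => binomial_term_succ_mul_div (mem_range.mp hk) l hl1,
    ← sum_mul, hbinom, mul_div_assoc]

/-- If `Y ~ Binomial(n, λ)`, then `E[Y/(n - Y + 1)] = (1 - λ^n) λ/(1 - λ)`. -/
theorem stmt7 (n : ℕ) (hn : 1 ≤ n) (l : ℝ) (hl : l ∈ Set.Ioo (0:ℝ) 1) :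
    ∑ i ∈ Finset.range (n + 1),
        (n.choose i : ℝ) * (1 - l) ^ (n - i) * l ^ i * ((i : ℝ) / ((n - i : ℕ) + 1 : ℝ))
      = (1 - l ^ n) * l / (1 - l) :=
  stmt7_general n l hl
end

section
/- Suppose Z has density f_θ with θ > 0, the family {f_θ} has the MLR property, and F_0 is the symmetric null distribution function with positive density. Let U = F_0(Z). Then P(U ∈ [0.5, 0.75)) ≥ P(U ∈ (0, 0.25]). -/
open MeasureTheory Set Filter Topology

/-- For `θ > 0` under MLR with a symmetric null, with `U = F₀(Z)`,
`P(U ∈ [0.5, 0.75)) ≥ P(U ∈ (0, 0.25])`. -/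
theorem stmt12 {Ω : Type*} [MeasurableSpace Ω] (μ : Measure Ω) [IsProbabilityMeasure μ]
    (Z : Ω → ℝ) (hZ : Measurable Z)
    (f : ℝ → ℝ → ℝ) (F0 : ℝ → ℝ)
    (hpos : ∀ θ z, 0 < f θ z)
    (hintg : ∀ θ, Integrable (f θ))
    (hprob : ∀ θ, ∫ x, f θ x = 1)
    (hsymmden : ∀ z, f 0 (-z) = f 0 z)
    (hF0 : ∀ z, F0 z = ∫ x in Iic z, f 0 x)
    (hMLR : ∀ θ θ' z z', θ < θ' → z < z' → f θ' z / f θ z ≤ f θ' z' / f θ z')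
    (θ : ℝ) (hθ : 0 < θ)
    (hlaw : ∀ s : Set ℝ, MeasurableSet s → μ (Z ⁻¹' s) = ENNReal.ofReal (∫ z in s, f θ z)) :
    μ {ω | F0 (Z ω) ∈ Ioc (0:ℝ) 0.25} ≤ μ {ω | F0 (Z ω) ∈ Ico (0.5:ℝ) 0.75} := by
  have hg := hintg 0
  -- positivity of integrals of f 0 over sets of positive measure
  have hpos_int : ∀ s : Set ℝ, MeasurableSet s → 0 < volume s → 0 < ∫ x in s, f 0 x := by
    intro s hs hvs
    rw [setIntegral_pos_iff_support_of_nonneg_ae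
      (ae_of_all _ fun x => (hpos 0 x).le) hg.integrableOn]
    have hsupp : Function.support (f 0) = univ := by
      ext x; simp [Function.mem_support, (hpos 0 x).ne']
    rwa [hsupp, univ_inter]
  -- F0 strictly monotone
  have hmono : StrictMono F0 := by
    intro z z' h
    have hu : Iic z ∪ Ioc z z' = Iic z' := Iic_union_Ioc_eq_Iic h.le
    have hps : 0 < ∫ x in Ioc z z', f 0 x := by
      refine hpos_int _ measurableSet_Ioc ?_
      rw [Real.volume_Ioc]
      exact ENNReal.ofReal_pos.mpr (by linarith)
    have := setIntegral_union (Iic_disjoint_Ioc le_rfl) measurableSet_Ioc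
      (hg.integrableOn (s := Iic z)) (hg.integrableOn (s := Ioc z z'))
    rw [hF0, hF0, ← hu, this]
    linarith
  -- F0 positive
  have hFpos : ∀ z, 0 < F0 z := by
    intro z
    rw [hF0]
    refine hpos_int _ measurableSet_Iic ?_
    simp [Real.volume_Iic]
  -- symmetry F0 (-z) = 1 - F0 z
  have hsymm : ∀ z, F0 (-z) = 1 - F0 z := by
    intro z
    have h1 : ∫ x in Ioi z, f 0 (-x) = ∫ x in Iic (-z), f 0 x := integral_comp_neg_Ioi z (f 0)
    have h2 : ∫ x in Ioi z, f 0 (-x) = ∫ x in Ioi z, f 0 x := by simp_rw [hsymmden]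
    have h3 : (∫ x in Iic z, f 0 x) + ∫ x in (Iic z)ᶜ, f 0 x = 1 := by
      rw [integral_add_compl measurableSet_Iic hg, hprob 0]
    rw [compl_Iic] at h3
    rw [hF0, hF0, ← h1, h2]
    linarith
  have hF00 : F0 0 = 1 / 2 := by have := hsymm 0; rw [neg_zero] at this; linarith
  -- continuity of F0
  have hcont : Continuous F0 := by
    have heq : F0 = fun z => (∫ x in Iic (0:ℝ), f 0 x) + ∫ x in (0:ℝ)..z, f 0 x := by
      funext z
      rw [hF0, ← intervalIntegral.integral_Iic_sub_Iic hg.integrableOn hg.integrableOn]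
      ring
    rw [heq]
    exact continuous_const.add
      (intervalIntegral.continuous_primitive (fun a b => hg.intervalIntegrable) 0)
  -- find b with F0 b = 3/4
  have htend : Tendsto (fun n : ℕ => ∫ x in Iic (n : ℝ), f 0 x) atTop (𝓝 1) := by
    have hU : (⋃ n : ℕ, Iic (n : ℝ)) = univ := by
      ext x
      simp only [mem_iUnion, mem_Iic, mem_univ, iff_true]
      obtain ⟨n, hn⟩ := exists_nat_ge x
      exact ⟨n, hn⟩
    have := tendsto_setIntegral_of_monotone (fun n : ℕ => measurableSet_Iic)
      (fun m n h => Iic_subset_Iic.mpr (Nat.cast_le.mpr h)) (f := f 0) (μ := volume)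
      (by rw [hU]; exact hg.integrableOn)
    rwa [hU, setIntegral_univ, hprob 0] at this
  obtain ⟨n, hn⟩ : ∃ n : ℕ, (3:ℝ)/4 < ∫ x in Iic (n : ℝ), f 0 x := by
    have := htend.eventually (eventually_gt_nhds (by norm_num : (3:ℝ)/4 < 1))
    exact this.exists
  have hFn : (3:ℝ)/4 ≤ F0 n := by rw [hF0]; linarith
  obtain ⟨b, hbmem, hFb⟩ : ∃ b ∈ Icc (0:ℝ) (n:ℝ), F0 b = 3/4 := by
    have h0n : (0:ℝ) ≤ n := Nat.cast_nonneg n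
    have := intermediate_value_Icc h0n hcont.continuousOn
    exact this ⟨by rw [hF00]; norm_num, hFn⟩
  set a := -b with ha
  have hFa : F0 a = 1/4 := by rw [ha, hsymm b, hFb]; norm_num
  have ha0 : a < 0 := by
    have : F0 a < F0 0 := by rw [hFa, hF00]; norm_num
    exact hmono.lt_iff_lt.mp this
  have hb0 : (0:ℝ) ≤ b := by linarith
  -- set identifications
  have hS1 : {z : ℝ | F0 z ∈ Ioc (0:ℝ) 0.25} = Iic a := by
    ext z
    simp only [mem_setOf_eq, mem_Ioc, mem_Iic]
    constructor
    · rintro ⟨-, h2⟩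
      have : F0 z ≤ F0 a := by rw [hFa]; norm_num at h2 ⊢; linarith
      exact hmono.le_iff_le.mp this
    · intro h
      refine ⟨hFpos z, ?_⟩
      have := hmono.le_iff_le.mpr h
      rw [hFa] at this; norm_num; linarith
  have hS2 : {z : ℝ | F0 z ∈ Ico (0.5:ℝ) 0.75} = Ico 0 b := by
    ext z
    simp only [mem_setOf_eq, mem_Ico]
    constructor
    · rintro ⟨h1, h2⟩
      constructor
      · apply hmono.le_iff_le.mp; rw [hF00]; norm_num at h1 ⊢; linarith
      · apply hmono.lt_iff_lt.mp; rw [hFb]; norm_num at h2 ⊢; linarith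
    · rintro ⟨h1, h2⟩
      have l1 := hmono.le_iff_le.mpr h1
      have l2 := hmono.lt_iff_lt.mpr h2
      rw [hF00] at l1; rw [hFb] at l2
      norm_num; constructor <;> linarith
  -- rewrite measures using the law of Z
  have hM1 : μ {ω | F0 (Z ω) ∈ Ioc (0:ℝ) 0.25}
      = ENNReal.ofReal (∫ z in Iic a, f θ z) := by
    have : {ω | F0 (Z ω) ∈ Ioc (0:ℝ) 0.25} = Z ⁻¹' (Iic a) := by
      ext ω; have := hS1; rw [Set.ext_iff] at this
      simpa using this (Z ω)
    rw [this, hlaw _ measurableSet_Iic]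
  have hM2 : μ {ω | F0 (Z ω) ∈ Ico (0.5:ℝ) 0.75}
      = ENNReal.ofReal (∫ z in Ico 0 b, f θ z) := by
    have : {ω | F0 (Z ω) ∈ Ico (0.5:ℝ) 0.75} = Z ⁻¹' (Ico 0 b) := by
      ext ω; have := hS2; rw [Set.ext_iff] at this
      simpa using this (Z ω)
    rw [this, hlaw _ measurableSet_Ico]
  rw [hM1, hM2]
  apply ENNReal.ofReal_le_ofReal
  -- the key real inequality
  set c := f θ a / f 0 a with hc
  have hfθ := hintg θ
  -- ∫ Iic a f θ ≤ c * ∫ Iic a f 0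
  have step1 : ∫ z in Iic a, f θ z ≤ ∫ z in Iic a, c * f 0 z := by
    refine setIntegral_mono_on hfθ.integrableOn ((hg.const_mul c).integrableOn)
      measurableSet_Iic ?_
    intro z hz
    rw [mem_Iic] at hz
    have hr : f θ z / f 0 z ≤ c := by
      rcases eq_or_lt_of_le hz with heq | h
      · rw [hc, heq]
      · exact hMLR 0 θ z a hθ h
    calc f θ z = (f θ z / f 0 z) * f 0 z := (div_mul_cancel₀ _ (hpos 0 z).ne').symm
    _ ≤ c * f 0 z := mul_le_mul_of_nonneg_right hr (hpos 0 z).le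
  -- ∫ Ico 0 b c * f 0 ≤ ∫ Ico 0 b f θ
  have step2 : ∫ z in Ico 0 b, c * f 0 z ≤ ∫ z in Ico 0 b, f θ z := by
    refine setIntegral_mono_on ((hg.const_mul c).integrableOn) hfθ.integrableOn
      measurableSet_Ico ?_
    intro z hz
    rw [mem_Ico] at hz
    have hr : c ≤ f θ z / f 0 z := hMLR 0 θ a z hθ (by linarith [hz.1])
    calc c * f 0 z ≤ (f θ z / f 0 z) * f 0 z := mul_le_mul_of_nonneg_right hr (hpos 0 z).le
    _ = f θ z := div_mul_cancel₀ _ (hpos 0 z).ne'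
  -- the two f-0 masses are equal to 1/4
  have hmass1 : ∫ z in Iic a, f 0 z = 1/4 := by rw [← hF0]; exact hFa
  have hmass2 : ∫ z in Ico 0 b, f 0 z = 1/4 := by
    have h1 : ∫ z in Ico 0 b, f 0 z = ∫ z in Ioc 0 b, f 0 z := by
      rw [setIntegral_congr_set Ico_ae_eq_Ioc]
    have hu : Iic (0:ℝ) ∪ Ioc 0 b = Iic b := Iic_union_Ioc_eq_Iic hb0
    have h2 := setIntegral_union (Iic_disjoint_Ioc le_rfl) measurableSet_Ioc
      (hg.integrableOn (s := Iic (0:ℝ))) (hg.integrableOn (s := Ioc 0 b))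
    rw [hu] at h2
    have h3 : F0 b = F0 0 + ∫ z in Ioc 0 b, f 0 z := by rw [hF0, hF0, h2]
    rw [h1]
    rw [hFb, hF00] at h3
    linarith
  calc ∫ z in Iic a, f θ z ≤ ∫ z in Iic a, c * f 0 z := step1
  _ = c * (1/4) := by rw [integral_const_mul, hmass1]
  _ = ∫ z in Ico 0 b, c * f 0 z := by rw [integral_const_mul, hmass2]
  _ ≤ ∫ z in Ico 0 b, f θ z := step2
end

section
/- Symmetrically, if Z has density f_θ with θ < 0 under the MLR property and symmetric null F_0, and U = F_0(Z), then P(U ∈ (0.25, 0.5]) ≥ P(U ∈ [0.75, 1)). -/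
open MeasureTheory Set

/-- For `θ < 0` under MLR with a symmetric null, with `U = F₀(Z)`,
`P(U ∈ (0.25, 0.5]) ≥ P(U ∈ [0.75, 1))`. -/
theorem stmt13 {Ω : Type*} [MeasurableSpace Ω] (μ : Measure Ω) [IsProbabilityMeasure μ]
    (Z : Ω → ℝ) (hZ : Measurable Z)
    (f : ℝ → ℝ → ℝ) (F0 : ℝ → ℝ)
    (hpos : ∀ θ z, 0 < f θ z)
    (hintg : ∀ θ, Integrable (f θ))
    (hprob : ∀ θ, ∫ x, f θ x = 1)
    (hsymmden : ∀ z, f 0 (-z) = f 0 z)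
    (hF0 : ∀ z, F0 z = ∫ x in Iic z, f 0 x)
    (hMLR : ∀ θ θ' z z', θ < θ' → z < z' → f θ' z / f θ z ≤ f θ' z' / f θ z')
    (θ : ℝ) (hθ : θ < 0)
    (hlaw : ∀ s : Set ℝ, MeasurableSet s → μ (Z ⁻¹' s) = ENNReal.ofReal (∫ z in s, f θ z)) :
    μ {ω | F0 (Z ω) ∈ Ico (0.75:ℝ) 1} ≤ μ {ω | F0 (Z ω) ∈ Ioc (0.25:ℝ) 0.5} := by
  have hi0 : Integrable (f 0) := hintg 0
  have hiθ : Integrable (f θ) := hintg θ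
  -- difference formula
  have hdiff : ∀ y z : ℝ, y ≤ z → ∫ x in Ioc y z, f 0 x = F0 z - F0 y := by
    intro y z hyz
    rw [hF0, hF0, eq_sub_iff_add_eq, add_comm, ← setIntegral_union (Iic_disjoint_Ioc le_rfl)
      measurableSet_Ioc hi0.integrableOn hi0.integrableOn, Iic_union_Ioc_eq_Iic hyz]
  -- positivity of integrals of f 0 over sets of positive measure
  have hposint : ∀ s : Set ℝ, MeasurableSet s → 0 < volume s → 0 < ∫ x in s, f 0 x := by
    intro s hs hvs
    rw [setIntegral_pos_iff_support_of_nonneg_ae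
      (Filter.Eventually.of_forall fun x => (hpos 0 x).le) hi0.integrableOn]
    have : Function.support (f 0) = univ := by
      ext x; simp [Function.support, (hpos 0 x).ne']
    rwa [this, univ_inter]
  -- F0 strictly monotone
  have hmono : StrictMono F0 := by
    intro y z hyz
    have h := hposint (Ioc y z) measurableSet_Ioc (by rw [Real.volume_Ioc]; simp [hyz])
    rw [hdiff y z hyz.le] at h; linarith
  -- tail formula
  have htail : ∀ z : ℝ, ∫ x in Ioi z, f 0 x = 1 - F0 z := by
    intro z
    have h := integral_add_compl (s := Iic z) measurableSet_Iic hi0 (f := f 0)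
    rw [compl_Iic, hprob 0] at h
    rw [hF0]; linarith
  have hlt1 : ∀ z, F0 z < 1 := by
    intro z
    have h := hposint (Ioi z) measurableSet_Ioi (by simp)
    rw [htail] at h; linarith
  -- symmetry
  have hFneg : ∀ c : ℝ, F0 (-c) = 1 - F0 c := by
    intro c
    rw [hF0, ← integral_comp_neg_Ioi]
    simp_rw [hsymmden]
    exact htail c
  have hF00 : F0 0 = 1/2 := by have := hFneg 0; rw [neg_zero] at this; linarith
  -- continuity of F0
  have hcont : Continuous F0 := by
    have h1 : Continuous fun b => ∫ x in (0:ℝ)..b, f 0 x :=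
      intervalIntegral.continuous_primitive (fun a b => hi0.intervalIntegrable) 0
    have : F0 = fun b => F0 0 + ∫ x in (0:ℝ)..b, f 0 x := by
      funext b
      rw [← intervalIntegral.integral_Iic_sub_Iic hi0.integrableOn hi0.integrableOn,
        ← hF0, ← hF0]
      ring
    rw [this]
    exact continuous_const.add h1
  -- find b with F0 b large
  have hbig : ∃ b : ℝ, (0.75:ℝ) < F0 b := by
    have hU : ⋃ n : ℕ, Iic (n:ℝ) = univ := by
      ext x
      simp only [mem_iUnion, mem_Iic, mem_univ, iff_true]
      exact ⟨⌈x⌉₊, Nat.le_ceil x⟩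
    have ht := tendsto_setIntegral_of_monotone (ι := ℕ) (s := fun n => Iic (n:ℝ))
      (fun _ => measurableSet_Iic) (fun m n hmn => Iic_subset_Iic.mpr (by exact_mod_cast hmn))
      (by rw [hU]; exact hi0.integrableOn)
    rw [hU, setIntegral_univ, hprob 0] at ht
    have := (ht.eventually (eventually_gt_nhds (by norm_num : (0.75:ℝ) < 1))).exists
    obtain ⟨n, hn⟩ := this
    exact ⟨n, by rw [hF0]; exact hn⟩
  obtain ⟨b, hb⟩ := hbig
  have hb0 : (0:ℝ) ≤ b := by
    by_contra h
    have := hmono (lt_of_not_ge h)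
    rw [hF00] at this; linarith
  -- IVT: find a with F0 a = 0.75
  obtain ⟨a, ha_mem, hFa⟩ : ∃ a ∈ Icc (0:ℝ) b, F0 a = 0.75 := by
    have := intermediate_value_Icc hb0 hcont.continuousOn
    have h75 : (0.75:ℝ) ∈ Icc (F0 0) (F0 b) := by
      constructor
      · rw [hF00]; norm_num
      · exact hb.le
    obtain ⟨a, ha, hFa⟩ := this h75
    exact ⟨a, ha, hFa⟩
  have ha0 : (0:ℝ) ≤ a := ha_mem.1
  have hFna : F0 (-a) = 0.25 := by rw [hFneg, hFa]; norm_num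
  -- set identifications
  have hset1 : {ω | F0 (Z ω) ∈ Ico (0.75:ℝ) 1} = Z ⁻¹' (Ici a) := by
    ext ω
    simp only [mem_setOf_eq, mem_Ico, mem_preimage, mem_Ici]
    constructor
    · rintro ⟨h1, _⟩
      exact hmono.le_iff_le.mp (by rw [hFa]; exact h1)
    · intro h
      exact ⟨by rw [← hFa]; exact hmono.monotone h, hlt1 _⟩
  have hset2 : {ω | F0 (Z ω) ∈ Ioc (0.25:ℝ) 0.5} = Z ⁻¹' (Ioc (-a) 0) := by
    ext ω
    simp only [mem_setOf_eq, mem_Ioc, mem_preimage]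
    constructor
    · rintro ⟨h1, h2⟩
      refine ⟨hmono.lt_iff_lt.mp (by rw [hFna]; exact h1),
        hmono.le_iff_le.mp (by rw [hF00]; norm_num at h2 ⊢; exact h2)⟩
    · rintro ⟨h1, h2⟩
      refine ⟨by rw [← hFna]; exact hmono h1, ?_⟩
      have := hmono.monotone h2
      rw [hF00] at this; norm_num; linarith
  -- MLR consequence: pointwise domination with c = f θ a / f 0 a
  set c : ℝ := f θ a / f 0 a with hc
  have hcpos : 0 < c := div_pos (hpos θ a) (hpos 0 a)
  have hkey1 : ∀ z, a ≤ z → f θ z ≤ c * f 0 z := by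
    intro z hz
    rcases eq_or_lt_of_le hz with rfl | hz'
    · rw [hc, div_mul_cancel₀ _ (hpos 0 _).ne']
    · have h := hMLR θ 0 a z hθ hz'
      rw [div_le_div_iff₀ (hpos θ a) (hpos θ z)] at h
      rw [hc, div_mul_eq_mul_div, le_div_iff₀ (hpos 0 a)]
      nlinarith
  have hkey2 : ∀ z, z ≤ a → c * f 0 z ≤ f θ z := by
    intro z hz
    rcases eq_or_lt_of_le hz with rfl | hz'
    · rw [hc, div_mul_cancel₀ _ (hpos 0 _).ne']
    · have h := hMLR θ 0 z a hθ hz'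
      rw [div_le_div_iff₀ (hpos θ z) (hpos θ a)] at h
      rw [hc, div_mul_eq_mul_div, div_le_iff₀ (hpos 0 a)]
      nlinarith
  -- integrals of f 0 over the two regions are both 1/4
  have hI1 : ∫ x in Ici a, f 0 x = 1/4 := by
    rw [integral_Ici_eq_integral_Ioi, htail, hFa]; norm_num
  have hI2 : ∫ x in Ioc (-a) 0, f 0 x = 1/4 := by
    rw [hdiff _ _ (by linarith), hF00, hFna]; norm_num
  -- integral comparison
  have hchain : ∫ z in Ici a, f θ z ≤ ∫ z in Ioc (-a) 0, f θ z := by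
    have h1 : ∫ z in Ici a, f θ z ≤ ∫ z in Ici a, c * f 0 z :=
      setIntegral_mono_on hiθ.integrableOn (hi0.const_mul c).integrableOn
        measurableSet_Ici (fun z hz => hkey1 z hz)
    have h2 : ∫ z in Ioc (-a) 0, c * f 0 z ≤ ∫ z in Ioc (-a) 0, f θ z :=
      setIntegral_mono_on (hi0.const_mul c).integrableOn hiθ.integrableOn
        measurableSet_Ioc (fun z hz => hkey2 z (le_trans hz.2 ha0))
    rw [integral_const_mul, hI1] at h1
    rw [integral_const_mul, hI2] at h2
    linarith
  rw [hset1, hset2, hlaw _ measurableSet_Ici, hlaw _ measurableSet_Ioc]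
  exact ENNReal.ofReal_le_ofReal hchain
end

section
/- If a density family satisfies the MLR property, then it is stochastically ordered: for θ ≤ θ* and every z ∈ ℝ, F_{θ*}(z) ≤ F_θ(z). -/
open MeasureTheory Set

/-- MLR implies stochastic ordering: `F_{θ*}(z) ≤ F_θ(z)` whenever `θ ≤ θ*`. -/
theorem stmt14 (f : ℝ → ℝ → ℝ) (F : ℝ → ℝ → ℝ)
    (hpos : ∀ θ z, 0 < f θ z)
    (hintg : ∀ θ, Integrable (f θ))
    (hprob : ∀ θ, ∫ x, f θ x = 1)
    (hF : ∀ θ z, F θ z = ∫ x in Iic z, f θ x)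
    (hMLR : ∀ θ θ' z z', θ < θ' → z < z' → f θ' z / f θ z ≤ f θ' z' / f θ z') :
    ∀ θ θ' z : ℝ, θ ≤ θ' → F θ' z ≤ F θ z := by
  intro θ θ' z hθ
  rcases eq_or_lt_of_le hθ with rfl | hθ
  · exact le_rfl
  rw [hF, hF]
  set c : ℝ := f θ' z / f θ z with hc
  set A : ℝ := ∫ x in Iic z, f θ' x with hA
  set B : ℝ := ∫ x in Iic z, f θ x with hB
  have hc0 : 0 ≤ c := div_nonneg (hpos θ' z).le (hpos θ z).le
  -- pointwise bounds
  have hle : ∀ x ∈ Iic z, f θ' x ≤ c * f θ x := by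
    intro x hx
    rcases eq_or_lt_of_le (mem_Iic.mp hx) with rfl | hx'
    · rw [hc, div_mul_cancel₀ _ (hpos θ x).ne']
    · exact (div_le_iff₀ (hpos θ x)).mp (hMLR θ θ' x z hθ hx')
  have hge : ∀ x ∈ Ioi z, c * f θ x ≤ f θ' x := by
    intro x hx
    have := hMLR θ θ' z x hθ (mem_Ioi.mp hx)
    rw [hc]
    calc f θ' z / f θ z * f θ x ≤ f θ' x / f θ x * f θ x :=
          mul_le_mul_of_nonneg_right this (hpos θ x).le
      _ = f θ' x := div_mul_cancel₀ _ (hpos θ x).ne'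
  -- integral decomposition
  have hsplit : ∀ ψ : ℝ → ℝ, Integrable ψ →
      (∫ x in Iic z, ψ x) + (∫ x in Ioi z, ψ x) = ∫ x, ψ x := by
    intro ψ hψ
    exact intervalIntegral.integral_Iic_add_Ioi hψ.integrableOn hψ.integrableOn
  have hA' : (∫ x in Ioi z, f θ' x) = 1 - A := by
    have := hsplit (f θ') (hintg θ')
    rw [hprob θ'] at this; linarith [this]
  have hB' : (∫ x in Ioi z, f θ x) = 1 - B := by
    have := hsplit (f θ) (hintg θ)
    rw [hprob θ] at this; linarith [this]
  -- key integral inequalities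
  have h1 : A ≤ c * B := by
    calc A ≤ ∫ x in Iic z, c * f θ x := by
          apply setIntegral_mono_on (hintg θ').integrableOn
            ((hintg θ).integrableOn.const_mul c) measurableSet_Iic hle
      _ = c * B := by rw [hB, integral_const_mul]
  have h2 : c * (1 - B) ≤ 1 - A := by
    rw [← hA', ← hB', ← integral_const_mul]
    apply setIntegral_mono_on ((hintg θ).integrableOn.const_mul c)
      (hintg θ').integrableOn measurableSet_Ioi hge
  have hB0 : 0 ≤ B := setIntegral_nonneg measurableSet_Iic (fun x _ => (hpos θ x).le)
  have hB1 : B ≤ 1 := by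
    rw [← hprob θ]
    exact setIntegral_le_integral (hintg θ) (Filter.Eventually.of_forall fun x => (hpos θ x).le)
  nlinarith [h1, h2, hB0, hB1]
end
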